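/- arXiv:1605.05198 — 5 statements merged into one kernel-verified Lean document; each statement's English description precedes it below -/
import Mathlib

section
/- Let G be an additive abelian group, a an integer, and φ, ψ : G → G additive group endomorphisms such that φ ∘ ψ = ψ ∘ φ = [a], where [a] denotes multiplication by a on G. Assume ψ is surjective. Then for every subset Y of G one has the equality of sets Stab(ψ⁻¹(Y)) ∩ ker([a]) = ψ⁻¹(Stab(Y) ∩ ker(φ)). -/
private lemma img_eq_iff {G : Type*} [AddCommGroup G] (S : Set G) (c : G) :
    (fun s => s + c) '' S = S ↔ ∀ x, x + c ∈ S ↔ x ∈ S := by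
  constructor
  · intro h x
    constructor
    · intro hx
      rw [← h] at hx
      obtain ⟨s, hs, he⟩ := hx
      have : s = x := by exact add_right_cancel he
      rwa [← this]
    · intro hx
      rw [← h]
      exact Set.mem_image_of_mem _ hx
  · intro h
    ext y
    constructor
    · rintro ⟨s, hs, rfl⟩
      exact (h s).mpr hs
    · intro hy
      exact ⟨y - c, (h (y - c)).mp (by simpa using hy), by simp⟩

/-- If `φ ∘ ψ = ψ ∘ φ = [a]` on an additive abelian group `G` and `ψ` is surjective,
then for every subset `Y ⊆ G`,
`Stab(ψ⁻¹(Y)) ∩ ker [a] = ψ⁻¹(Stab(Y) ∩ ker φ)`, where `Stab(S) = {t | S + t = S}`. -/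
theorem stab_preimage_inter_ker_eq
    {G : Type*} [AddCommGroup G] (a : ℤ) (φ ψ : G →+ G)
    (hφψ : ∀ x, φ (ψ x) = a • x) (hψφ : ∀ x, ψ (φ x) = a • x)
    (hψ : Function.Surjective ψ) (Y : Set G) :
    {t : G | (fun s => s + t) '' (ψ ⁻¹' Y) = ψ ⁻¹' Y} ∩ {x : G | a • x = 0} =
      ψ ⁻¹' ({t : G | (fun s => s + t) '' Y = Y} ∩ {x : G | φ x = 0}) := by
  ext t
  simp only [Set.mem_inter_iff, Set.mem_preimage, Set.mem_setOf_eq, img_eq_iff]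
  constructor
  · rintro ⟨h1, h2⟩
    refine ⟨fun y => ?_, by rw [hφψ, h2]⟩
    obtain ⟨x, rfl⟩ := hψ y
    have := h1 x
    simp only [Set.mem_preimage, map_add] at this
    exact this
  · rintro ⟨h1, h2⟩
    refine ⟨fun x => ?_, by rw [← hφψ, h2]⟩
    simp only [Set.mem_preimage, map_add]
    exact h1 (ψ x)
end

section
/- Let G be an additive abelian group, a an integer, and φ, ψ : G → G additive group endomorphisms such that φ ∘ ψ = ψ ∘ φ = [a], where [a] denotes multiplication by a on G. Assume ψ is surjective, that ker(ψ) is finite and that ker(φ) is finite. Then for every subset Y of G, the cardinality identity |Stab(ψ⁻¹(Y)) ∩ ker([a])| = |ker(ψ)| · |Stab(Y) ∩ ker(φ)| holds (all three sets involved are finite). -/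
/-- If `φ ∘ ψ = ψ ∘ φ = [a]` on an additive abelian group `G`, `ψ` is surjective and both
kernels are finite, then for every subset `Y ⊆ G`,
`|Stab(ψ⁻¹(Y)) ∩ ker [a]| = |ker ψ| ⬝ |Stab(Y) ∩ ker φ|`, where `Stab(S) = {t | S + t = S}`. -/
theorem ncard_stab_preimage_inter_ker
    {G : Type*} [AddCommGroup G] (a : ℤ) (φ ψ : G →+ G)
    (hφψ : ∀ x, φ (ψ x) = a • x) (hψφ : ∀ x, ψ (φ x) = a • x)
    (hψ : Function.Surjective ψ)
    (hkψ : {x : G | ψ x = 0}.Finite) (hkφ : {x : G | φ x = 0}.Finite)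
    (Y : Set G) :
    ({t : G | (fun s => s + t) '' (ψ ⁻¹' Y) = ψ ⁻¹' Y} ∩ {x : G | a • x = 0}).ncard =
      {x : G | ψ x = 0}.ncard * ({t : G | (fun s => s + t) '' Y = Y} ∩ {x : G | φ x = 0}).ncard := by
  classical
  set B := ({t : G | (fun s => s + t) '' Y = Y} ∩ {x : G | φ x = 0}) with hB
  have hmem : ∀ s : G, (fun y => y + s) '' Y = Y → ∀ y, y ∈ Y ↔ y + s ∈ Y := by
    intro s hs y
    constructor
    · intro hy; rw [← hs]; exact ⟨y, hy, rfl⟩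
    · intro hy
      conv at hy => rw [← hs]
      obtain ⟨y', hy', h⟩ := hy
      have : y' = y := add_right_cancel h
      rwa [← this]
  have hset : ({t : G | (fun s => s + t) '' (ψ ⁻¹' Y) = ψ ⁻¹' Y} ∩ {x : G | a • x = 0})
      = ψ ⁻¹' B := by
    ext t
    simp only [Set.mem_inter_iff, Set.mem_setOf_eq, Set.mem_preimage, hB]
    constructor
    · rintro ⟨hst, ha⟩
      refine ⟨?_, by rw [hφψ, ha]⟩
      ext y
      constructor
      · rintro ⟨y', hy', rfl⟩
        obtain ⟨x, rfl⟩ := hψ y'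
        have hx : x + t ∈ ψ ⁻¹' Y := by rw [← hst]; exact ⟨x, hy', rfl⟩
        simpa [map_add] using hx
      · intro hy
        obtain ⟨x, rfl⟩ := hψ y
        have hx : x ∈ ψ ⁻¹' Y := hy
        rw [← hst] at hx
        obtain ⟨x', hx', rfl⟩ := hx
        exact ⟨ψ x', hx', by simp [map_add]⟩
    · rintro ⟨hst, hf⟩
      have ha : a • t = 0 := by rw [← hφψ]; exact hf
      refine ⟨?_, ha⟩
      have key := hmem (ψ t) hst
      ext x
      constructor
      · rintro ⟨x', hx', rfl⟩
        simp only [Set.mem_preimage, map_add]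
        exact (key (ψ x')).1 hx'
      · intro hx
        refine ⟨x - t, ?_, by simp⟩
        simp only [Set.mem_preimage]
        apply (key (ψ (x - t))).2
        have : ψ (x - t) + ψ t = ψ x := by rw [map_sub]; abel
        rw [this]
        exact hx
  rw [hset]
  set K := {x : G | ψ x = 0} with hK
  let g : G → G := Function.surjInv hψ
  have hg : ∀ y, ψ (g y) = y := fun y => Function.surjInv_eq hψ y
  have e : (ψ ⁻¹' B) ≃ K × B :=
    { toFun := fun t => (⟨t.1 - g (ψ t.1), by simp [hK, map_sub, hg]⟩, ⟨ψ t.1, t.2⟩)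
      invFun := fun p => ⟨g p.2.1 + p.1.1, by
        simp only [Set.mem_preimage, map_add, hg]
        have h0 : ψ p.1.1 = 0 := p.1.2
        rw [h0, add_zero]
        exact p.2.2⟩
      left_inv := fun t => by
        apply Subtype.ext
        simp
      right_inv := fun p => by
        have h0 : ψ p.1.1 = 0 := p.1.2
        ext
        · simp [hg, h0]
        · simp [hg, h0] }
  rw [← Nat.card_coe_set_eq, ← Nat.card_coe_set_eq, ← Nat.card_coe_set_eq,
    Nat.card_congr e, Nat.card_prod]
end

section
/- Let X be a preirreducible topological space, let f, g : X → ℝ be functions and let k₁, k₂ be real numbers. If the closure of {x ∈ X : f(x) ≤ k₁} is not all of X and the closure of {x ∈ X : g(x) ≤ k₂} is not all of X, then the closure of {x ∈ X : f(x) + g(x) ≤ k₁ + k₂} is not all of X. -/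
/-- In a preirreducible topological space, if the sublevel sets `{f ≤ k₁}` and `{g ≤ k₂}`
are not dense, then neither is the sublevel set `{f + g ≤ k₁ + k₂}`. -/
theorem closure_sublevel_add_ne_univ
    {X : Type*} [TopologicalSpace X] [PreirreducibleSpace X]
    (f g : X → ℝ) (k₁ k₂ : ℝ)
    (hf : closure {x : X | f x ≤ k₁} ≠ Set.univ)
    (hg : closure {x : X | g x ≤ k₂} ≠ Set.univ) :
    closure {x : X | f x + g x ≤ k₁ + k₂} ≠ Set.univ := by
  have hsub : {x : X | f x + g x ≤ k₁ + k₂} ⊆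
      closure {x : X | f x ≤ k₁} ∪ closure {x : X | g x ≤ k₂} := by
    intro x hx
    by_cases h : f x ≤ k₁
    · exact Or.inl (subset_closure h)
    · exact Or.inr (subset_closure (by simp only [Set.mem_setOf_eq] at hx ⊢; linarith))
  have hne₁ : ((closure {x : X | f x ≤ k₁})ᶜ).Nonempty := by
    rw [Set.nonempty_compl]; exact hf
  have hne₂ : ((closure {x : X | g x ≤ k₂})ᶜ).Nonempty := by
    rw [Set.nonempty_compl]; exact hg
  have hint := (PreirreducibleSpace.isPreirreducible_univ (X := X)) _ _
    isClosed_closure.isOpen_compl isClosed_closure.isOpen_compl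
    (by simpa using hne₁) (by simpa using hne₂)
  obtain ⟨y, -, hy₁, hy₂⟩ := hint
  intro h
  have : y ∈ closure {x : X | f x + g x ≤ k₁ + k₂} := h ▸ Set.mem_univ y
  have := closure_minimal hsub (isClosed_closure.union isClosed_closure) this
  rcases this with h | h
  · exact hy₁ h
  · exact hy₂ h
end

section
/- Let X be a preirreducible topological space, let ι be a nonempty finite index type, and for each i ∈ ι let fᵢ : X → ℝ be a function and kᵢ a real number. If for every i ∈ ι the closure of {x ∈ X : fᵢ(x) ≤ kᵢ} is not all of X, then the closure of {x ∈ X : Σᵢ fᵢ(x) ≤ Σᵢ kᵢ} is not all of X. -/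
/-- In a preirreducible topological space, if for each `i` in a nonempty finite index type
the sublevel set `{fᵢ ≤ kᵢ}` is not dense, then the sublevel set `{∑ᵢ fᵢ ≤ ∑ᵢ kᵢ}` is
not dense. -/
theorem closure_sublevel_sum_ne_univ
    {X : Type*} [TopologicalSpace X] [PreirreducibleSpace X]
    {ι : Type*} [Fintype ι] [Nonempty ι]
    (f : ι → X → ℝ) (k : ι → ℝ)
    (hf : ∀ i, closure {x : X | f i x ≤ k i} ≠ Set.univ) :
    closure {x : X | ∑ i, f i x ≤ ∑ i, k i} ≠ Set.univ := by
  classical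
  rcases isEmpty_or_nonempty X with hX | hX
  · exact absurd (by ext x; exact (IsEmpty.false x).elim) (hf (Classical.arbitrary ι))
  set C : ι → Set X := fun i => closure {x : X | f i x ≤ k i} with hC
  have hirr : IsIrreducible (Set.univ : Set X) :=
    ⟨Set.univ_nonempty, PreirreducibleSpace.isPreirreducible_univ⟩
  have hopen : ∀ u ∈ Finset.univ.image fun i => (C i)ᶜ, IsOpen u := by
    intro u hu
    simp only [Finset.mem_image] at hu
    obtain ⟨i, _, rfl⟩ := hu
    exact isClosed_closure.isOpen_compl
  have hnonempty : ∀ u ∈ Finset.univ.image fun i => (C i)ᶜ,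
      (Set.univ ∩ u).Nonempty := by
    intro u hu
    simp only [Finset.mem_image] at hu
    obtain ⟨i, _, rfl⟩ := hu
    rw [Set.univ_inter]
    exact Set.nonempty_compl.mpr (hf i)
  obtain ⟨x, -, hx⟩ := isIrreducible_iff_sInter.mp hirr _ hopen hnonempty
  have hxC : ∀ i, x ∉ C i := by
    intro i
    exact hx ((C i)ᶜ) (Finset.mem_coe.mpr (Finset.mem_image_of_mem _ (Finset.mem_univ i)))
  intro hcl
  have hsub : {x : X | ∑ i, f i x ≤ ∑ i, k i} ⊆ ⋃ i, C i := by
    intro y hy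
    by_contra hy'
    simp only [Set.mem_iUnion, not_exists] at hy'
    have hlt : ∀ i, k i < f i y := by
      intro i
      by_contra h
      exact hy' i (subset_closure (not_lt.mp h))
    have : ∑ i, k i < ∑ i, f i y :=
      Finset.sum_lt_sum_of_nonempty Finset.univ_nonempty fun i _ => hlt i
    exact absurd hy (not_le.mpr this)
  have hclosed : IsClosed (⋃ i, C i) := isClosed_iUnion_of_finite fun i => isClosed_closure
  have : x ∈ ⋃ i, C i := by
    have := hcl ▸ Set.mem_univ x
    exact (closure_minimal hsub hclosed) this
  obtain ⟨i, hi⟩ := Set.mem_iUnion.mp this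
  exact hxC i hi
end

section
/- Let X be a preirreducible topological space and f, g : X → ℝ. For a function h : X → ℝ set S(h) = {θ ∈ ℝ : the closure of {x ∈ X : h(x) ≤ θ} is not all of X} and μ(h) = sup S(h) (the supremum taken in ℝ, with the convention that sup of the empty set is 0). Assume S(f) and S(g) are nonempty and S(f + g) is bounded above. Then μ(f + g) ≥ μ(f) + μ(g). -/
/-- Superadditivity of the abstract essential minimum
`μ(h) = sSup {θ | closure {x | h x ≤ θ} ≠ univ}` on a preirreducible space:
if `S(f)` and `S(g)` are nonempty and `S(f + g)` is bounded above, then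
`μ(f + g) ≥ μ(f) + μ(g)`. -/
theorem essMin_add_ge
    {X : Type*} [TopologicalSpace X] [PreirreducibleSpace X]
    (f g : X → ℝ)
    (hf : {θ : ℝ | closure {x : X | f x ≤ θ} ≠ Set.univ}.Nonempty)
    (hg : {θ : ℝ | closure {x : X | g x ≤ θ} ≠ Set.univ}.Nonempty)
    (hfg : BddAbove {θ : ℝ | closure {x : X | f x + g x ≤ θ} ≠ Set.univ}) :
    sSup {θ : ℝ | closure {x : X | f x + g x ≤ θ} ≠ Set.univ} ≥
      sSup {θ : ℝ | closure {x : X | f x ≤ θ} ≠ Set.univ} +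
        sSup {θ : ℝ | closure {x : X | g x ≤ θ} ≠ Set.univ} := by
  -- Key step: S(f) + S(g) ⊆ S(f+g)
  have key : ∀ θ₁ ∈ {θ : ℝ | closure {x : X | f x ≤ θ} ≠ Set.univ},
      ∀ θ₂ ∈ {θ : ℝ | closure {x : X | g x ≤ θ} ≠ Set.univ},
      closure {x : X | f x + g x ≤ θ₁ + θ₂} ≠ Set.univ := by
    intro θ₁ h1 θ₂ h2
    set U := (closure {x : X | f x ≤ θ₁})ᶜ with hU
    set V := (closure {x : X | g x ≤ θ₂})ᶜ with hV
    have hUo : IsOpen U := isOpen_compl_iff.2 isClosed_closure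
    have hVo : IsOpen V := isOpen_compl_iff.2 isClosed_closure
    have hUne : U.Nonempty := by
      rw [Set.nonempty_compl]; exact h1
    have hVne : V.Nonempty := by
      rw [Set.nonempty_compl]; exact h2
    obtain ⟨z, hzU, hzV⟩ := nonempty_preirreducible_inter hUo hVo hUne hVne
    intro hcl
    have hz : z ∈ closure {x : X | f x + g x ≤ θ₁ + θ₂} := hcl ▸ Set.mem_univ z
    have hW : IsOpen (U ∩ V) := hUo.inter hVo
    obtain ⟨y, hyW, hy⟩ := mem_closure_iff.1 hz (U ∩ V) hW ⟨hzU, hzV⟩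
    have hyf : ¬ f y ≤ θ₁ := fun h => hyW.1 (subset_closure h)
    have hyg : ¬ g y ≤ θ₂ := fun h => hyW.2 (subset_closure h)
    have : f y + g y ≤ θ₁ + θ₂ := hy
    push_neg at hyf hyg
    linarith
  obtain ⟨a, ha⟩ := hf
  obtain ⟨b, hb⟩ := hg
  have hbf : BddAbove {θ : ℝ | closure {x : X | f x ≤ θ} ≠ Set.univ} := by
    obtain ⟨M, hM⟩ := hfg
    exact ⟨M - b, fun θ hθ => by linarith [hM (key θ hθ b hb)]⟩
  have hbg : BddAbove {θ : ℝ | closure {x : X | g x ≤ θ} ≠ Set.univ} := by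
    obtain ⟨M, hM⟩ := hfg
    exact ⟨M - a, fun θ hθ => by linarith [hM (key a ha θ hθ)]⟩
  rw [ge_iff_le]
  have : ∀ θ₁ ∈ {θ : ℝ | closure {x : X | f x ≤ θ} ≠ Set.univ},
      ∀ θ₂ ∈ {θ : ℝ | closure {x : X | g x ≤ θ} ≠ Set.univ},
      θ₁ + θ₂ ≤ sSup {θ : ℝ | closure {x : X | f x + g x ≤ θ} ≠ Set.univ} :=
    fun θ₁ h1 θ₂ h2 => le_csSup hfg (key θ₁ h1 θ₂ h2)
  have h1 : sSup {θ : ℝ | closure {x : X | f x ≤ θ} ≠ Set.univ} ≤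
      sSup {θ : ℝ | closure {x : X | f x + g x ≤ θ} ≠ Set.univ} -
        sSup {θ : ℝ | closure {x : X | g x ≤ θ} ≠ Set.univ} := by
    apply csSup_le ⟨a, ha⟩
    intro θ₁ h1
    rw [le_sub_iff_add_le]
    have h2' : sSup {θ : ℝ | closure {x : X | g x ≤ θ} ≠ Set.univ} ≤
        sSup {θ : ℝ | closure {x : X | f x + g x ≤ θ} ≠ Set.univ} - θ₁ :=
      csSup_le ⟨b, hb⟩ (fun θ₂ h2 => by
        have := this θ₁ h1 θ₂ h2; linarith)
    linarith
  linarith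
end
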